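/- Marginal conformal coverage: let (X₁,Y₁),…,(X_m,Y_m),(X,Y) be i.i.d., let s be a score function such that the scores s(Xᵢ,Yᵢ), s(X,Y) are i.i.d. with atomless distribution, and let q̂_α be the ⌈(m+1)(1−α)⌉-th smallest of s(X₁,Y₁),…,s(X_m,Y_m). Then 1 − α ≤ P[s(X,Y) ≤ q̂_α] ≤ 1 − α + 1/(m+1), where the probability is over all m+1 samples. -/

import Mathlib

/-!
The scores are a.s. pairwise distinct and their joint law is invariant under permuting the
samples, so the rank of the test score among all `m + 1` scores is uniform on `{0, …, m}`.
The test score is at most the `k`-th smallest calibration score iff fewer than `k` calibration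
scores lie strictly below it, i.e. iff its rank is `< k`; this has probability `k / (m + 1)`, and
for `k = ⌈(m + 1)(1 - α)⌉` that lies between `1 - α` and `1 - α + 1 / (m + 1)`.
-/

open MeasureTheory ProbabilityTheory

/-- `orderStat m v k` is the `k`-th smallest (1-indexed) of the values `v 0, …, v (m-1)`. -/
noncomputable def orderStat (m : ℕ) (v : Fin m → ℝ) (k : ℕ) : ℝ :=
  ((Multiset.ofList (List.ofFn v)).sort (· ≤ ·)).getD (k - 1) 0

open Finset
open scoped ENNReal

theorem List.Pairwise.getElem_lt_iff_lt_countP {α : Type*} [LinearOrder α] {L : List α}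
    (hL : L.Pairwise (· ≤ ·)) (a : α) {i : ℕ} (hi : i < L.length) :
    L[i] < a ↔ i < L.countP (· < a) := by
  induction L generalizing i with
  | nil => simp at hi
  | cons x L ih =>
    obtain ⟨hx, hL⟩ := List.pairwise_cons.mp hL
    by_cases hxa : x < a
    · rw [List.countP_cons_of_pos (by simpa using hxa)]
      cases i with
      | zero => simpa using hxa
      | succ i => simpa using ih hL (by simpa using hi)
    · have hcount : L.countP (· < a) = 0 :=
        List.countP_eq_zero.mpr fun y hy => by simpa using fun hya => hxa ((hx y hy).trans_lt hya)
      rw [List.countP_cons_of_neg (by simpa using hxa), hcount]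
      cases i with
      | zero => simpa using hxa
      | succ i => simpa using fun h => hxa ((hx _ (List.getElem_mem _)).trans_lt h)

theorem orderStat_lt_iff {m k : ℕ} (v : Fin m → ℝ) (a : ℝ) (hk : 1 ≤ k) (hkm : k ≤ m) :
    orderStat m v k < a ↔ k ≤ #{i | v i < a} := by
  set L := (Multiset.ofList (List.ofFn v)).sort (· ≤ ·)
  have hlen : k - 1 < L.length := by simp [L]; omega
  have hcount : L.countP (· < a) = #{i | v i < a} := by
    rw [← Multiset.coe_countP, Multiset.sort_eq, ← Fin.univ_val_map, Multiset.countP_map]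
    rfl
  rw [orderStat, List.getD_eq_getElem _ _ hlen,
    (Multiset.pairwise_sort _ _).getElem_lt_iff_lt_countP a hlen, hcount]
  omega

section TupleRank

variable {α : Type*} [LinearOrder α] {n : ℕ}

def tupleRank (z : Fin n → α) (t : Fin n) : ℕ := #{i | z i < z t}

theorem tupleRank_lt_tupleRank {z : Fin n → α} {t u : Fin n} (h : z t < z u) :
    tupleRank z t < tupleRank z u := by
  refine card_lt_card <| (ssubset_iff_of_subset fun i => ?_).mpr ⟨t, by simpa using h, by simp⟩
  simpa using fun hi => hi.trans h

theorem tupleRank_lt (z : Fin n → α) (t : Fin n) : tupleRank z t < n := by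
  simpa [tupleRank] using card_lt_card (filter_ssubset.mpr ⟨t, mem_univ t, lt_irrefl (z t)⟩)

theorem tupleRank_injective {z : Fin n → α} (hz : Function.Injective z) :
    Function.Injective (tupleRank z) := by
  intro t u h
  rcases lt_trichotomy (z t) (z u) with hlt | heq | hgt
  · exact absurd h (tupleRank_lt_tupleRank hlt).ne
  · exact hz heq
  · exact absurd h (tupleRank_lt_tupleRank hgt).ne'

theorem card_tupleRank_lt {z : Fin n → α} (hz : Function.Injective z) {k : ℕ} (hk : k ≤ n) :
    #{t | tupleRank z t < k} = k := by
  let e : Fin n ≃ Fin n := Equiv.ofBijective (fun t => ⟨tupleRank z t, tupleRank_lt z t⟩)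
    (Finite.injective_iff_bijective.mp fun t u h => tupleRank_injective hz (congrArg Fin.val h))
  rw [card_equiv e (t := {i : Fin n | i < k}) (by simp [e]), Fin.card_filter_val_lt]
  exact min_eq_right hk

theorem tupleRank_comp_perm (z : Fin n → α) (σ : Equiv.Perm (Fin n)) (t : Fin n) :
    tupleRank (z ∘ σ) t = tupleRank z (σ t) :=
  card_equiv σ (by simp)

theorem tupleRank_last {m : ℕ} (z : Fin (m + 1) → α) :
    tupleRank z (Fin.last m) = #{i : Fin m | z i.castSucc < z (Fin.last m)} := by
  rw [tupleRank, card_filter, card_filter, Fin.sum_univ_castSucc]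
  simp

end TupleRank

theorem measurable_tupleRank {n : ℕ} (t : Fin n) :
    Measurable fun z : Fin n → ℝ => tupleRank z t := by
  simp_rw [tupleRank, card_filter]
  exact Finset.measurable_sum _ fun i _ => Measurable.ite
    (measurableSet_lt (measurable_pi_apply i) (measurable_pi_apply t)) measurable_const
    measurable_const

theorem ProbabilityTheory.IndepFun.measure_eq_eq_zero {Ω : Type*} [MeasurableSpace Ω]
    {μ : Measure Ω} [IsFiniteMeasure μ] {X Y : Ω → ℝ} (hXY : X ⟂ᵢ[μ] Y)
    (hX : AEMeasurable X μ) (hY : AEMeasurable Y μ) [NullSingletonClass (μ.map Y)] :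
    μ {ω | X ω = Y ω} = 0 := by
  have hdiag : MeasurableSet {p : ℝ × ℝ | p.1 = p.2} :=
    measurableSet_eq_fun measurable_fst measurable_snd
  have hfiber (x : ℝ) : Prod.mk x ⁻¹' {p : ℝ × ℝ | p.1 = p.2} = {x} := by
    ext; simp [eq_comm]
  change μ ((fun ω => (X ω, Y ω)) ⁻¹' {p | p.1 = p.2}) = 0
  rw [← Measure.map_apply_of_aemeasurable (hX.prodMk hY) hdiag,
    hXY.map_prod_eq_prod_map_map hX hY, Measure.prod_apply hdiag]
  simp [hfiber]

theorem ae_injective_pi {ι : Type*} [Fintype ι] (ν : Measure ℝ) [IsProbabilityMeasure ν]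
    [NullSingletonClass ν] : ∀ᵐ z ∂(Measure.pi fun _ : ι => ν), Function.Injective z := by
  have hcoord : iIndepFun (fun i (z : ι → ℝ) => z i) (Measure.pi fun _ => ν) :=
    iIndepFun_pi (X := fun _ => id) fun _ => aemeasurable_id
  simp only [Function.Injective, ae_all_iff]
  intro i j
  by_cases hij : i = j
  · exact ae_of_all _ fun _ _ => hij
  · have : NullSingletonClass ((Measure.pi fun _ : ι => ν).map fun z => z j) := by
      rw [(measurePreserving_eval _ j).map_eq]; infer_instance
    refine measure_mono_null (fun z hz => ?_) ((hcoord.indepFun hij).measure_eq_eq_zero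
      (measurable_pi_apply i).aemeasurable (measurable_pi_apply j).aemeasurable)
    simp_all

theorem measurePreserving_comp_perm {ι β : Type*} [Fintype ι] [MeasurableSpace β]
    (ν : Measure β) [SigmaFinite ν] (σ : Equiv.Perm ι) :
    MeasurePreserving (fun z : ι → β => z ∘ σ) (Measure.pi fun _ => ν)
      (Measure.pi fun _ => ν) := by
  convert measurePreserving_piCongrLeft (fun _ : ι => ν) σ.symm using 1
  ext z i
  simp [MeasurableEquiv.piCongrLeft, Equiv.piCongrLeft_apply]

theorem pi_tupleRank_lt {n : ℕ} (ν : Measure ℝ) [IsProbabilityMeasure ν]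
    [NullSingletonClass ν] {k : ℕ} (hk : k ≤ n) (t : Fin n) :
    (Measure.pi fun _ => ν) {z | tupleRank z t < k} = k / n := by
  set P := Measure.pi fun _ : Fin n => ν
  have hmeas (u : Fin n) : MeasurableSet {z : Fin n → ℝ | tupleRank z u < k} :=
    measurable_tupleRank u measurableSet_Iio
  have hsymm (u : Fin n) : P {z | tupleRank z u < k} = P {z | tupleRank z t < k} := by
    rw [← (measurePreserving_comp_perm ν (Equiv.swap u t)).measure_preimage
      (hmeas t).nullMeasurableSet]
    congr 1
    ext z
    simp [tupleRank_comp_perm]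
  have hsum : ∑ u, P {z | tupleRank z u < k} = k := by
    calc ∑ u, P {z | tupleRank z u < k}
        = ∫⁻ z, ∑ u, {z | tupleRank z u < k}.indicator 1 z ∂P := by
          rw [lintegral_finsetSum _ fun u _ => (measurable_one.indicator (hmeas u))]
          simp [lintegral_indicator_one (hmeas _)]
      _ = ∫⁻ _, (k : ℝ≥0∞) ∂P := by
          refine lintegral_congr_ae ((ae_injective_pi ν).mono fun z hz => ?_)
          have hcard := congrArg (Nat.cast (R := ℝ≥0∞)) (card_tupleRank_lt hz hk)
          rw [natCast_card_filter] at hcard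
          simpa [Set.indicator_apply] using hcard
      _ = k := by simp
  rw [Fintype.sum_congr _ _ hsymm, sum_const, card_univ, Fintype.card_fin, nsmul_eq_mul] at hsum
  rw [ENNReal.eq_div_iff (by exact_mod_cast t.pos.ne') (ENNReal.natCast_ne_top n), hsum]

theorem measure_le_orderStat {Ω : Type*} [MeasurableSpace Ω] (μ : Measure Ω)
    [IsProbabilityMeasure μ] {m : ℕ} (f : Fin (m + 1) → Ω → ℝ) (hmeas : ∀ i, Measurable (f i))
    (hindep : iIndepFun f μ) (hident : ∀ i, μ.map (f i) = μ.map (f 0))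
    [NullSingletonClass (μ.map (f 0))] {k : ℕ} (hk : 1 ≤ k) (hkm : k ≤ m) :
    μ {ω | f (Fin.last m) ω ≤ orderStat m (fun i => f i.castSucc ω) k} = k / (m + 1) := by
  have hZ : Measurable fun ω i => f i ω := measurable_pi_lambda _ hmeas
  have hlaw : μ.map (fun ω i => f i ω) = Measure.pi fun _ => μ.map (f 0) := by
    rw [hindep.map_fun_eq_pi_map fun i => (hmeas i).aemeasurable, funext hident]
  have hevent : {ω | f (Fin.last m) ω ≤ orderStat m (fun i => f i.castSucc ω) k} =
      (fun ω i => f i ω) ⁻¹' {z | tupleRank z (Fin.last m) < k} := by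
    ext ω
    rw [Set.mem_ofPred_eq, Set.mem_preimage, Set.mem_ofPred_eq, ← not_lt,
      orderStat_lt_iff _ _ hk hkm, not_le, tupleRank_last]
  have hset : MeasurableSet {z : Fin (m + 1) → ℝ | tupleRank z (Fin.last m) < k} :=
    measurable_tupleRank _ measurableSet_Iio
  have : IsProbabilityMeasure (μ.map (f 0)) :=
    Measure.isProbabilityMeasure_map (hmeas 0).aemeasurable
  rw [hevent, ← Measure.map_apply hZ hset, hlaw, pi_tupleRank_lt _ (by omega),
    Nat.cast_add_one]

theorem Int.ceil_toNat_div_mem_Icc {N x : ℝ} (hN : 0 < N) (hx : 0 ≤ x) :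
    (⌈N * x⌉.toNat : ℝ) / N ∈ Set.Icc x (x + 1 / N) := by
  have hceil : (⌈N * x⌉.toNat : ℝ) = ⌈N * x⌉ := by
    exact_mod_cast Int.toNat_of_nonneg (Int.ceil_nonneg (by positivity))
  rw [hceil, Set.mem_Icc, le_div_iff₀ hN, div_le_iff₀ hN, add_mul, one_div_mul_cancel hN.ne']
  constructor
  · linarith [Int.le_ceil (N * x)]
  · linarith [Int.ceil_lt_add_one (N * x)]

theorem stmt_11_general {Ω 𝒳 𝒴 : Type*} [MeasurableSpace Ω] (μ : Measure Ω) [IsProbabilityMeasure μ]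
    (m : ℕ) (X : Fin (m + 1) → Ω → 𝒳) (Y : Fin (m + 1) → Ω → 𝒴)
    (s : 𝒳 → 𝒴 → ℝ)
    (hmeas : ∀ i, Measurable (fun ω => s (X i ω) (Y i ω)))
    (hindep : iIndepFun (fun i ω => s (X i ω) (Y i ω)) μ)
    (hident : ∀ i, μ.map (fun ω => s (X i ω) (Y i ω)) = μ.map (fun ω => s (X 0 ω) (Y 0 ω)))
    (hatomless : ∀ x : ℝ, μ.map (fun ω => s (X 0 ω) (Y 0 ω)) {x} = 0)
    (α : ℝ) (hα : α ∈ Set.Ioo (0:ℝ) 1)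
    (hidx : ⌈((m : ℝ) + 1) * (1 - α)⌉.toNat ≤ m) :
    ENNReal.ofReal (1 - α) ≤
        μ {ω | s (X (Fin.last m) ω) (Y (Fin.last m) ω) ≤
            orderStat m (fun i => s (X (Fin.castSucc i) ω) (Y (Fin.castSucc i) ω))
              (⌈((m : ℝ) + 1) * (1 - α)⌉.toNat)} ∧
      μ {ω | s (X (Fin.last m) ω) (Y (Fin.last m) ω) ≤
            orderStat m (fun i => s (X (Fin.castSucc i) ω) (Y (Fin.castSucc i) ω))
              (⌈((m : ℝ) + 1) * (1 - α)⌉.toNat)} ≤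
        ENNReal.ofReal (1 - α + 1 / ((m : ℝ) + 1)) := by
  set k := ⌈((m : ℝ) + 1) * (1 - α)⌉.toNat
  have hpos : 0 < 1 - α := sub_pos.mpr hα.2
  have hk : 1 ≤ k := Nat.one_le_iff_ne_zero.mpr <| by
    simpa [k] using mul_pos (by positivity : (0 : ℝ) < m + 1) hpos
  have : NullSingletonClass (μ.map fun ω => s (X 0 ω) (Y 0 ω)) := ⟨hatomless⟩
  have hcov : (k : ℝ≥0∞) / (m + 1) = ENNReal.ofReal (k / ((m : ℝ) + 1)) := by
    rw [ENNReal.ofReal_div_of_pos (by positivity), ← Nat.cast_add_one, ← Nat.cast_add_one,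
      ENNReal.ofReal_natCast, ENNReal.ofReal_natCast]
  obtain ⟨hlow, hhigh⟩ := Int.ceil_toNat_div_mem_Icc (by positivity : (0 : ℝ) < m + 1) hpos.le
  rw [measure_le_orderStat μ _ hmeas hindep hident hk hidx, hcov]
  exact ⟨ENNReal.ofReal_le_ofReal hlow, ENNReal.ofReal_le_ofReal hhigh⟩

/-- Marginal conformal coverage (Theorem 1): with `m` i.i.d. calibration samples and one
test sample, all with i.i.d. atomless conformal scores, and `q̂_α` the
`⌈(m+1)(1−α)⌉`-th smallest calibration score,
`1 − α ≤ P[s(X,Y) ≤ q̂_α] ≤ 1 − α + 1/(m+1)`. -/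
theorem stmt_11 {Ω 𝒳 𝒴 : Type*} [MeasurableSpace Ω] (μ : Measure Ω) [IsProbabilityMeasure μ]
    (m : ℕ) (hm : 0 < m) (X : Fin (m + 1) → Ω → 𝒳) (Y : Fin (m + 1) → Ω → 𝒴)
    (s : 𝒳 → 𝒴 → ℝ)
    (hmeas : ∀ i, Measurable (fun ω => s (X i ω) (Y i ω)))
    (hindep : iIndepFun (fun i ω => s (X i ω) (Y i ω)) μ)
    (hident : ∀ i, μ.map (fun ω => s (X i ω) (Y i ω)) = μ.map (fun ω => s (X 0 ω) (Y 0 ω)))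
    (hatomless : ∀ x : ℝ, μ.map (fun ω => s (X 0 ω) (Y 0 ω)) {x} = 0)
    (α : ℝ) (hα : α ∈ Set.Ioo (0:ℝ) 1)
    (hidx : ⌈((m : ℝ) + 1) * (1 - α)⌉.toNat ≤ m) :
    ENNReal.ofReal (1 - α) ≤
        μ {ω | s (X (Fin.last m) ω) (Y (Fin.last m) ω) ≤
            orderStat m (fun i => s (X (Fin.castSucc i) ω) (Y (Fin.castSucc i) ω))
              (⌈((m : ℝ) + 1) * (1 - α)⌉.toNat)} ∧
      μ {ω | s (X (Fin.last m) ω) (Y (Fin.last m) ω) ≤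
            orderStat m (fun i => s (X (Fin.castSucc i) ω) (Y (Fin.castSucc i) ω))
              (⌈((m : ℝ) + 1) * (1 - α)⌉.toNat)} ≤
        ENNReal.ofReal (1 - α + 1 / ((m : ℝ) + 1)) :=
  stmt_11_general μ m X Y s hmeas hindep hident hatomless α hα hidx
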